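/- arXiv:1807.03979 — 5 statements merged into one kernel-verified Lean document; each statement's English description precedes it below -/
import Mathlib

section
/- The lifted preference relation on nonempty subsets of alternatives — defined by comparing first the most-preferred element (via the underlying strict total order), then subset cardinality, then recursively the sets with their top elements removed — is a strict total order on the collection of nonempty finite subsets of the alternatives. -/
/-- The lifted preference relation on finite subsets of the alternatives `A`
(preference given by a linear order on `A`, smaller = more preferred, so the
most preferred element of a nonempty subset is its minimum, and `⊤ : WithTop A`
handles the empty set): `S` is preferred to `S'` iff the top of `S` is
preferred to the top of `S'`, or the tops agree and `S` is smaller, or the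
tops agree, the cards agree, and recursively the sets with their tops removed
compare favourably.  The recursion is fuelled; fuel `Fintype.card A` is enough
to decide any pair of subsets of `A`. -/
def liftRel {A : Type} [LinearOrder A] : ℕ → Finset A → Finset A → Prop
  | 0, _, _ => False
  | fuel+1, S, S' =>
    S.min < S'.min ∨
    (S.min = S'.min ∧ S.card < S'.card) ∨
    (S.min = S'.min ∧ S.card = S'.card ∧
      liftRel fuel (S.filter fun (a : A) => (a : WithTop A) ≠ S.min)
        (S'.filter fun (a : A) => (a : WithTop A) ≠ S'.min))

lemma liftRel_irrefl {A : Type} [LinearOrder A] :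
    ∀ (fuel : ℕ) (S : Finset A), ¬ liftRel fuel S S := by
  intro fuel
  induction fuel with
  | zero => intro S h; exact h
  | succ n ih =>
    intro S h
    rcases h with h | ⟨_, h⟩ | ⟨_, _, h⟩
    · exact lt_irrefl _ h
    · exact lt_irrefl _ h
    · exact ih _ h

lemma liftRel_trans {A : Type} [LinearOrder A] :
    ∀ (fuel : ℕ) (S T U : Finset A), liftRel fuel S T → liftRel fuel T U →
      liftRel fuel S U := by
  intro fuel
  induction fuel with
  | zero => intro _ _ _ h; exact absurd h (fun h => h)
  | succ n ih =>
    intro S T U h1 h2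
    rcases h1 with h1 | ⟨e1, c1⟩ | ⟨e1, d1, r1⟩ <;>
      rcases h2 with h2 | ⟨e2, c2⟩ | ⟨e2, d2, r2⟩
    · exact Or.inl (lt_trans h1 h2)
    · exact Or.inl (e2 ▸ h1)
    · exact Or.inl (e2 ▸ h1)
    · exact Or.inl (e1 ▸ h2)
    · exact Or.inr (Or.inl ⟨e1.trans e2, lt_trans c1 c2⟩)
    · exact Or.inr (Or.inl ⟨e1.trans e2, d2 ▸ c1⟩)
    · exact Or.inl (e1 ▸ h2)
    · exact Or.inr (Or.inl ⟨e1.trans e2, d1 ▸ c2⟩)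
    · exact Or.inr (Or.inr ⟨e1.trans e2, d1.trans d2, ih _ _ _ r1 r2⟩)

lemma filter_ne_min_eq_erase {A : Type} [LinearOrder A] (S : Finset A)
    (hS : S.Nonempty) :
    (S.filter fun (a : A) => (a : WithTop A) ≠ S.min) = S.erase (S.min' hS) := by
  ext a
  simp only [Finset.mem_filter, Finset.mem_erase, ← Finset.coe_min' hS, ne_eq,
    WithTop.coe_eq_coe, and_comm]

lemma liftRel_total {A : Type} [LinearOrder A] :
    ∀ (fuel : ℕ) (S T : Finset A), S.card ≤ fuel → T.card ≤ fuel → S ≠ T →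
      liftRel fuel S T ∨ liftRel fuel T S := by
  intro fuel
  induction fuel with
  | zero =>
    intro S T hS hT hne
    exact absurd (by
      rw [Finset.card_eq_zero.mp (Nat.le_zero.mp hS),
        Finset.card_eq_zero.mp (Nat.le_zero.mp hT)]) hne
  | succ n ih =>
    intro S T hS hT hne
    rcases lt_trichotomy S.min T.min with hm | hm | hm
    · exact Or.inl (Or.inl hm)
    · -- minima equal
      have hSne : S.Nonempty := by
        by_contra h
        have hSe : S = ∅ := Finset.not_nonempty_iff_eq_empty.mp h
        have hTe : T = ∅ := by
          by_contra hT'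
          have hTne : T.Nonempty := Finset.nonempty_iff_ne_empty.mpr hT'
          have : T.min < ⊤ := by
            rw [← Finset.coe_min' hTne]
            exact WithTop.coe_lt_top _
          rw [← hm, hSe, Finset.min_empty] at this
          exact lt_irrefl _ this
        exact hne (hSe.trans hTe.symm)
      have hTne : T.Nonempty := by
        by_contra h
        have hTe : T = ∅ := Finset.not_nonempty_iff_eq_empty.mp h
        have : S.min < ⊤ := by
          rw [← Finset.coe_min' hSne]
          exact WithTop.coe_lt_top _
        rw [hm, hTe, Finset.min_empty] at this
        exact lt_irrefl _ this
      rcases lt_trichotomy S.card T.card with hc | hc | hc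
      · exact Or.inl (Or.inr (Or.inl ⟨hm, hc⟩))
      · -- cards equal: recurse
        have hmem : S.min' hSne = T.min' hTne := by
          have := hm
          rw [← Finset.coe_min' hSne, ← Finset.coe_min' hTne] at this
          exact WithTop.coe_eq_coe.mp this
        have hne' : S.erase (S.min' hSne) ≠ T.erase (T.min' hTne) := by
          intro h
          apply hne
          have h1 : insert (S.min' hSne) (S.erase (S.min' hSne)) = S :=
            Finset.insert_erase (S.min'_mem hSne)
          have h2 : insert (T.min' hTne) (T.erase (T.min' hTne)) = T :=
            Finset.insert_erase (T.min'_mem hTne)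
          rw [← h1, ← h2, h, hmem]
        have hcS : (S.erase (S.min' hSne)).card ≤ n := by
          rw [Finset.card_erase_of_mem (S.min'_mem hSne)]
          omega
        have hcT : (T.erase (T.min' hTne)).card ≤ n := by
          rw [Finset.card_erase_of_mem (T.min'_mem hTne)]
          omega
        rcases ih _ _ hcS hcT hne' with h | h
        · left; right; right
          refine ⟨hm, hc, ?_⟩
          rw [filter_ne_min_eq_erase S hSne, filter_ne_min_eq_erase T hTne]
          exact h
        · right; right; right
          refine ⟨hm.symm, hc.symm, ?_⟩
          rw [filter_ne_min_eq_erase S hSne, filter_ne_min_eq_erase T hTne]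
          exact h
      · exact Or.inr (Or.inr (Or.inl ⟨hm.symm, hc⟩))
    · exact Or.inr (Or.inl hm)

/-- The lifted preference relation is a strict total order on the nonempty
finite subsets of the alternatives: it is irreflexive, transitive, and total. -/
theorem liftRel_strict_total_order {A : Type} [Fintype A] [LinearOrder A] :
    (∀ S : Finset A, S.Nonempty → ¬ liftRel (Fintype.card A) S S) ∧
    (∀ S T U : Finset A, S.Nonempty → T.Nonempty → U.Nonempty →
      liftRel (Fintype.card A) S T → liftRel (Fintype.card A) T U →
      liftRel (Fintype.card A) S U) ∧
    (∀ S T : Finset A, S.Nonempty → T.Nonempty → S ≠ T →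
      liftRel (Fintype.card A) S T ∨ liftRel (Fintype.card A) T S) := by
  refine ⟨fun S _ => liftRel_irrefl _ S,
    fun S T U _ _ _ h1 h2 => liftRel_trans _ S T U h1 h2,
    fun S T _ _ hne => liftRel_total _ S T ?_ ?_ hne⟩
  · exact S.card_le_univ.trans_eq (Finset.card_univ)
  · exact T.card_le_univ.trans_eq (Finset.card_univ)
end

section
/- With exactly two alternatives, in sequential voting (plurality or approval) with uniform tie-breaking, if strictly more voters prefer alternative a to alternative b, then the winning set of the subgame-perfect equilibrium is {a}. -/
open Classical

/-- `maxWrt worse s` picks the element of `s` that every other element of `s` is `worse` than. -/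
noncomputable def maxWrt {O : Type} [Nonempty O] (worse : O → O → Prop) (s : Finset O) : O :=
  if h : ∃ o ∈ s, ∀ o' ∈ s, o' ≠ o → worse o' o then h.choose else Classical.arbitrary O

/-- Backward-induction (subgame perfect) outcome of a sequential game with `n` remaining movers,
`worse k` the strict "is worse than" relation of the `k`-th mover on outcomes. -/
noncomputable def speOut {B O : Type} [Fintype B] [Nonempty O]
    (worse : ℕ → O → O → Prop) (outcome : List B → O) : ℕ → List B → O
  | 0, h => outcome h
  | n+1, h => maxWrt (worse h.length)
      (Finset.univ.image (fun b => speOut worse outcome n (h ++ [b])))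

/-- number of ballots approving `x`. -/
def votes {m : ℕ} (h : List (Finset (Fin m))) (x : Fin m) : ℕ :=
  h.countP (fun b => decide (x ∈ b))

/-- set of alternatives with the maximal number of votes. -/
def winSet {m : ℕ} (h : List (Finset (Fin m))) : Finset (Fin m) :=
  Finset.univ.filter (fun x => ∀ y, votes h y ≤ votes h x)

/-- deterministic tie-breaking: the member of the winning set with least tie-break rank. -/
noncomputable def detWinner {m : ℕ} [Nonempty (Fin m)] (tb : Fin m → ℕ)
    (h : List (Finset (Fin m))) : Fin m :=
  maxWrt (fun y x => tb x < tb y) (winSet h)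

def topRank {m : ℕ} (r : Fin m → ℕ) (S : Finset (Fin m)) : WithTop ℕ := (S.image r).min

/-- remove the most preferred element. -/
def shed {m : ℕ} (r : Fin m → ℕ) (S : Finset (Fin m)) : Finset (Fin m) :=
  S.filter (fun a => (r a : WithTop ℕ) ≠ topRank r S)

/-- the lifted strict preference on subsets: better top, or equal top and smaller,
or equal top and equal size and recursively better after removing the tops. -/
def liftBetter {m : ℕ} (r : Fin m → ℕ) : ℕ → Finset (Fin m) → Finset (Fin m) → Prop
  | 0, _, _ => False
  | fuel+1, S, S' =>
    topRank r S < topRank r S' ∨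
    (topRank r S = topRank r S' ∧ S.card < S'.card) ∨
    (topRank r S = topRank r S' ∧ S.card = S'.card ∧
      liftBetter r fuel (shed r S) (shed r S'))

/-- `x` beats `y` in pairwise majority comparison. -/
def beats {n m : ℕ} (prof : Fin n → Fin m → ℕ) (x y : Fin m) : Prop :=
  (Finset.univ.filter (fun i => prof i x < prof i y)).card >
  (Finset.univ.filter (fun i => prof i y < prof i x)).card

lemma fin2_cases (a b x : Fin 2) (hab : a ≠ b) : x = a ∨ x = b := by
  have ha := a.isLt; have hb := b.isLt; have hx := x.isLt
  have h1 : a.val ≠ b.val := fun h => hab (Fin.ext h)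
  have : x.val = a.val ∨ x.val = b.val := by omega
  rcases this with h | h
  · exact Or.inl (Fin.ext h)
  · exact Or.inr (Fin.ext h)

noncomputable def Wf (a b : Fin 2) (t : ℤ) : Finset (Fin 2) :=
  if 0 < t then {a} else if t = 0 then {a, b} else {b}

lemma Wf_pos (a b : Fin 2) {t : ℤ} (h : 0 < t) : Wf a b t = {a} := by simp [Wf, h]

lemma Wf_zero (a b : Fin 2) : Wf a b 0 = {a, b} := by simp [Wf]

lemma Wf_neg (a b : Fin 2) {t : ℤ} (h : t < 0) : Wf a b t = {b} := by
  unfold Wf; rw [if_neg (by omega), if_neg (by omega)]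

lemma Wf_comm (a b : Fin 2) (t : ℤ) : Wf a b t = Wf b a (-t) := by
  rcases lt_trichotomy 0 t with h | h | h
  · rw [Wf_pos a b h, Wf_neg b a (by omega), ]
  · rw [← h, Wf_zero, neg_zero, Wf_zero, Finset.pair_comm]
  · rw [Wf_neg a b h, Wf_pos b a (by omega)]

lemma winSet_eq (a b : Fin 2) (hab : a ≠ b) (l : List (Finset (Fin 2))) :
    winSet l = Wf a b ((votes l a : ℤ) - votes l b) := by
  rcases lt_trichotomy (votes l a) (votes l b) with h | h | h
  · rw [Wf_neg a b (by omega)]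
    ext x
    simp only [winSet, Finset.mem_filter, Finset.mem_univ, true_and, Finset.mem_singleton]
    constructor
    · intro hx
      rcases fin2_cases a b x hab with hx1 | hx1
      · have := hx b; rw [hx1] at this; omega
      · exact hx1
    · intro hx y
      rw [hx]
      rcases fin2_cases a b y hab with hy | hy <;> rw [hy] <;> omega
  · rw [show (votes l a : ℤ) - votes l b = 0 by omega, Wf_zero]
    ext x
    simp only [winSet, Finset.mem_filter, Finset.mem_univ, true_and, Finset.mem_insert,
      Finset.mem_singleton]
    constructor
    · intro _; exact fin2_cases a b x hab
    · rintro (hx | hx) y <;> rw [hx] <;>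
        rcases fin2_cases a b y hab with hy | hy <;> rw [hy] <;> omega
  · rw [Wf_pos a b (by omega)]
    ext x
    simp only [winSet, Finset.mem_filter, Finset.mem_univ, true_and, Finset.mem_singleton]
    constructor
    · intro hx
      rcases fin2_cases a b x hab with hx1 | hx1
      · exact hx1
      · have := hx a; rw [hx1] at this; omega
    · intro hx y
      rw [hx]
      rcases fin2_cases a b y hab with hy | hy <;> rw [hy] <;> omega

lemma maxWrt_eq_of {O : Type} [Nonempty O] (worse : O → O → Prop) (s : Finset O) (o : O)
    (ho : o ∈ s) (hdom : ∀ o' ∈ s, o' ≠ o → worse o' o)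
    (hasym : ∀ x y, worse x y → worse y x → False) :
    maxWrt worse s = o := by
  have hex : ∃ o ∈ s, ∀ o' ∈ s, o' ≠ o → worse o' o := ⟨o, ho, hdom⟩
  unfold maxWrt
  rw [dif_pos hex]
  obtain ⟨h1, h2⟩ := hex.choose_spec
  by_contra hne
  exact hasym _ _ (hdom _ h1 hne) (h2 o ho (Ne.symm hne))

lemma liftBetter_asymm {m : ℕ} (r : Fin m → ℕ) :
    ∀ fuel S S', liftBetter r fuel S S' → liftBetter r fuel S' S → False := by
  intro fuel
  induction fuel with
  | zero => intro S S' h _; exact h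
  | succ n ih =>
    intro S S' h1 h2
    simp only [liftBetter] at h1 h2
    rcases h1 with h1 | ⟨e1, c1⟩ | ⟨e1, c1, l1⟩ <;>
      rcases h2 with h2 | ⟨e2, c2⟩ | ⟨e2, c2, l2⟩
    · exact lt_asymm h1 h2
    · rw [e2] at h1; exact lt_irrefl _ h1
    · rw [e2] at h1; exact lt_irrefl _ h1
    · rw [e1] at h2; exact lt_irrefl _ h2
    · omega
    · omega
    · rw [e1] at h2; exact lt_irrefl _ h2
    · omega
    · exact ih _ _ l1 l2

lemma topRank_singleton {m : ℕ} (r : Fin m → ℕ) (x : Fin m) :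
    topRank r {x} = (r x : WithTop ℕ) := by
  simp [topRank]

lemma topRank_pair {m : ℕ} (r : Fin m → ℕ) (x y : Fin m) :
    topRank r {x, y} = min (r x : WithTop ℕ) (r y) := by
  simp [topRank, Finset.image_insert, Finset.min_insert]

lemma card_pair' (a b : Fin 2) (hab : a ≠ b) : ({a, b} : Finset (Fin 2)).card = 2 := by
  rw [Finset.card_insert_of_notMem (by simp [hab]), Finset.card_singleton]

lemma lb_single_pair (r : Fin 2 → ℕ) (a b : Fin 2) (hab : a ≠ b) (hr : r a < r b) :
    liftBetter r 2 {a} ({a, b} : Finset (Fin 2)) := by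
  have e : topRank r ({a} : Finset (Fin 2)) = topRank r {a, b} := by
    rw [topRank_singleton, topRank_pair, min_eq_left]
    exact_mod_cast le_of_lt hr
  exact Or.inr (Or.inl ⟨e, by rw [Finset.card_singleton, card_pair' a b hab]; omega⟩)

lemma lb_single_single (r : Fin 2 → ℕ) (a b : Fin 2) (hr : r a < r b) :
    liftBetter r 2 {a} ({b} : Finset (Fin 2)) := by
  refine Or.inl ?_
  rw [topRank_singleton, topRank_singleton]
  exact_mod_cast hr

lemma lb_pair_single (r : Fin 2 → ℕ) (a b : Fin 2) (hr : r a < r b) :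
    liftBetter r 2 ({a, b} : Finset (Fin 2)) {b} := by
  refine Or.inl ?_
  rw [topRank_singleton, topRank_pair, min_eq_left (by exact_mod_cast le_of_lt hr)]
  exact_mod_cast hr

lemma Wf_better (r : Fin 2 → ℕ) (a b : Fin 2) (hab : a ≠ b) (hr : r a < r b)
    (t t' : ℤ) (hle : t' ≤ t) (hne : Wf a b t ≠ Wf a b t') :
    liftBetter r 2 (Wf a b t) (Wf a b t') := by
  rcases lt_trichotomy 0 t with h | h | h
  · rw [Wf_pos a b h] at hne ⊢
    rcases lt_trichotomy 0 t' with h' | h' | h'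
    · exact absurd (Wf_pos a b h').symm hne
    · rw [← h', Wf_zero] at hne ⊢
      exact lb_single_pair r a b hab hr
    · rw [Wf_neg a b h'] at hne ⊢
      exact lb_single_single r a b hr
  · have ht : t = 0 := h.symm
    subst ht
    rw [Wf_zero] at hne ⊢
    rcases lt_trichotomy 0 t' with h' | h' | h'
    · omega
    · exact absurd (by rw [← h', Wf_zero]) hne
    · rw [Wf_neg a b h'] at hne ⊢
      exact lb_pair_single r a b hr
  · rw [Wf_neg a b h] at hne ⊢
    have h' : t' < 0 := by omega
    exact absurd (Wf_neg a b h').symm hne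

lemma votes_append (l : List (Finset (Fin 2))) (x : Finset (Fin 2)) (c : Fin 2) :
    votes (l ++ [x]) c = votes l c + (if c ∈ x then 1 else 0) := by
  simp [votes, List.countP_append, List.countP_cons]

noncomputable def sg (prof : ℕ → Fin 2 → ℕ) (a b : Fin 2) (i : ℕ) : ℤ :=
  if prof i a < prof i b then 1 else -1

lemma key {B : Type} [Fintype B] (emb : B → Finset (Fin 2))
    (prof : ℕ → Fin 2 → ℕ) (a b : Fin 2) (hab : a ≠ b)
    (bl1 : B) (hbl1a : a ∈ emb bl1) (hbl1b : b ∉ emb bl1)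
    (bl2 : B) (hbl2b : b ∈ emb bl2) (hbl2a : a ∉ emb bl2) :
    ∀ (k : ℕ) (h : List B), (∀ i, h.length ≤ i → i < h.length + k → prof i a ≠ prof i b) →
    speOut (fun i (S S' : Finset (Fin 2)) => liftBetter (prof i) 2 S' S)
      (fun h => winSet (h.map emb)) k h
    = Wf a b (((votes (h.map emb) a : ℤ) - votes (h.map emb) b)
        + ∑ i ∈ Finset.Ico h.length (h.length + k), sg prof a b i) := by
  intro k
  induction k with
  | zero =>
    intro h _
    simp only [speOut, Nat.add_zero, Finset.Ico_self, Finset.sum_empty, add_zero]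
    exact winSet_eq a b hab (h.map emb)
  | succ k ih =>
    intro h hne
    set L := h.length with hL
    set M : ℤ := (votes (h.map emb) a : ℤ) - votes (h.map emb) b with hM
    set S : ℤ := ∑ i ∈ Finset.Ico (L + 1) (L + 1 + k), sg prof a b i with hS
    have hsum : ∑ i ∈ Finset.Ico L (L + (k + 1)), sg prof a b i = sg prof a b L + S := by
      rw [show L + (k + 1) = L + 1 + k from by omega,
        Finset.sum_eq_sum_Ico_succ_bot (by omega) (sg prof a b)]
    -- value of each continuation
    have step : ∀ bl : B,
        speOut (fun i (S S' : Finset (Fin 2)) => liftBetter (prof i) 2 S' S)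
          (fun h => winSet (h.map emb)) k (h ++ [bl])
        = Wf a b (M + ((if a ∈ emb bl then (1:ℤ) else 0) - (if b ∈ emb bl then (1:ℤ) else 0)) + S) := by
      intro bl
      have hlen : (h ++ [bl]).length = L + 1 := by simp [hL]
      have := ih (h ++ [bl]) (by
        intro i h1 h2
        rw [hlen] at h1 h2
        exact hne i (by omega) (by omega))
      rw [this, hlen]
      have hmap : (h ++ [bl]).map emb = h.map emb ++ [emb bl] := by simp
      rw [hmap, votes_append, votes_append]
      congr 1
      push_cast
      ring
    show maxWrt _ _ = _
    rw [hsum, ← add_assoc]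
    have hasym : ∀ x y : Finset (Fin 2),
        (fun S S' : Finset (Fin 2) => liftBetter (prof L) 2 S' S) x y →
        (fun S S' : Finset (Fin 2) => liftBetter (prof L) 2 S' S) y x → False := by
      intro x y h1 h2
      exact liftBetter_asymm (prof L) 2 _ _ h1 h2
    have hneL : prof L a ≠ prof L b := hne L (le_refl _) (by omega)
    by_cases hc : prof L a < prof L b
    · have hsg : sg prof a b L = 1 := if_pos hc
      rw [hsg]
      apply maxWrt_eq_of _ _ _ _ _ hasym
      · have e1 : (if a ∈ emb bl1 then (1:ℤ) else 0) = 1 := by simp [hbl1a]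
        have e2 : (if b ∈ emb bl1 then (1:ℤ) else 0) = 0 := by simp [hbl1b]
        have hv : Wf a b (M + 1 + S)
            = speOut (fun i (S S' : Finset (Fin 2)) => liftBetter (prof i) 2 S' S)
              (fun h => winSet (h.map emb)) k (h ++ [bl1]) := by
          rw [step bl1, e1, e2]; ring_nf
        rw [hv]
        exact @Finset.mem_image_of_mem _ _ (fun _ _ => Classical.propDecidable _) _ _ _
          (Finset.mem_univ _)
      · intro o' ho' hone
        simp only [Finset.mem_image, Finset.mem_univ, true_and] at ho'
        obtain ⟨bl, hbl⟩ := ho'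
        rw [← hbl, step bl]
        refine Wf_better (prof L) a b hab hc (M + 1 + S)
          (M + ((if a ∈ emb bl then (1:ℤ) else 0) - (if b ∈ emb bl then (1:ℤ) else 0)) + S)
          (by split_ifs <;> omega) ?_
        rw [← step bl, hbl]
        exact (Ne.symm hone)
    · have hc' : prof L b < prof L a := by omega
      have hsg : sg prof a b L = -1 := if_neg hc
      rw [hsg]
      apply maxWrt_eq_of _ _ _ _ _ hasym
      · have e1 : (if a ∈ emb bl2 then (1:ℤ) else 0) = 0 := by simp [hbl2a]
        have e2 : (if b ∈ emb bl2 then (1:ℤ) else 0) = 1 := by simp [hbl2b]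
        have hv : Wf a b (M + -1 + S)
            = speOut (fun i (S S' : Finset (Fin 2)) => liftBetter (prof i) 2 S' S)
              (fun h => winSet (h.map emb)) k (h ++ [bl2]) := by
          rw [step bl2, e1, e2]; ring_nf
        rw [hv]
        exact @Finset.mem_image_of_mem _ _ (fun _ _ => Classical.propDecidable _) _ _ _
          (Finset.mem_univ _)
      · intro o' ho' hone
        simp only [Finset.mem_image, Finset.mem_univ, true_and] at ho'
        obtain ⟨bl, hbl⟩ := ho'
        rw [← hbl, step bl]
        rw [Wf_comm a b (M + -1 + S), Wf_comm a b (M + _ + S)]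
        refine Wf_better (prof L) b a (Ne.symm hab) hc' (-(M + -1 + S))
          (-(M + ((if a ∈ emb bl then (1:ℤ) else 0) - (if b ∈ emb bl then (1:ℤ) else 0)) + S))
          (by split_ifs <;> omega) ?_
        rw [← Wf_comm, ← Wf_comm, ← step bl, hbl]
        exact (Ne.symm hone)

lemma sum_sg_pos (n : ℕ) (prof : ℕ → Fin 2 → ℕ) (a b : Fin 2)
    (hne : ∀ i < n, prof i a ≠ prof i b)
    (hmaj : ((Finset.range n).filter (fun i => prof i a < prof i b)).card >
            ((Finset.range n).filter (fun i => prof i b < prof i a)).card) :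
    0 < ∑ i ∈ Finset.range n, sg prof a b i := by
  have hfe : (Finset.range n).filter (fun i => prof i b < prof i a)
      = (Finset.range n).filter (fun i => ¬ (prof i a < prof i b)) := by
    apply Finset.filter_congr
    intro i hi
    have := hne i (Finset.mem_range.1 hi)
    constructor <;> intro h' <;> omega
  have hcard : ((Finset.range n).filter (fun i => prof i a < prof i b)).card
      + ((Finset.range n).filter (fun i => ¬ (prof i a < prof i b))).card = n := by
    rw [Finset.card_filter_add_card_filter_not]
    · exact Finset.card_range n
  have hsum : ∑ i ∈ Finset.range n, sg prof a b i
      = 2 * (((Finset.range n).filter (fun i => prof i a < prof i b)).card : ℤ) - n := by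
    have : ∀ i ∈ Finset.range n, sg prof a b i
        = 2 * (if prof i a < prof i b then (1:ℤ) else 0) - 1 := by
      intro i _
      unfold sg
      split_ifs <;> ring
    rw [Finset.sum_congr rfl this, Finset.sum_sub_distrib, ← Finset.mul_sum,
      Finset.sum_boole, Finset.sum_const, Finset.card_range]
    simp
  rw [hfe] at hmaj
  omega

/-- With two alternatives and uniform tie-breaking, if strictly more voters
prefer `a` to `b` then the SPE winning set is `{a}`, both for sequential
plurality voting (ballots: an optional alternative) and for sequential
approval voting (ballots: any subset). Voter preferences on winning sets are
the lifted preferences. -/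
theorem two_alternatives_uniform_majority
    (n : ℕ) (prof : ℕ → Fin 2 → ℕ) (hinj : ∀ i < n, Function.Injective (prof i))
    (a b : Fin 2) (hab : a ≠ b)
    (hmaj : ((Finset.range n).filter (fun i => prof i a < prof i b)).card >
            ((Finset.range n).filter (fun i => prof i b < prof i a)).card) :
    speOut (fun i (S S' : Finset (Fin 2)) => liftBetter (prof i) 2 S' S)
      (fun h : List (Option (Fin 2)) => winSet (h.map Option.toFinset)) n [] = {a} ∧
    speOut (fun i (S S' : Finset (Fin 2)) => liftBetter (prof i) 2 S' S)
      (fun h : List (Finset (Fin 2)) => winSet h) n [] = {a} := by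
  
  have hne : ∀ i < n, prof i a ≠ prof i b := by
    intro i hi h
    exact hab (hinj i hi h)
  have hpos := sum_sg_pos n prof a b hne hmaj
  rw [Finset.range_eq_Ico] at hpos
  constructor
  · have := key Option.toFinset prof a b hab (some a) (by simp) (by simpa using hab.symm)
      (some b) (by simp) (by simpa using hab) n [] (by
        intro i h1 h2
        simp only [List.length_nil, Nat.zero_add] at h2
        exact hne i h2)
    rw [this]
    simp only [List.map_nil, List.length_nil, Nat.zero_add]
    have hv : votes ([] : List (Finset (Fin 2))) a = 0 := by simp [votes]
    have hv' : votes ([] : List (Finset (Fin 2))) b = 0 := by simp [votes]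
    rw [hv, hv']
    exact Wf_pos a b (by push_cast; omega)
  · have hfun : (fun h : List (Finset (Fin 2)) => winSet (List.map id h))
        = (fun h : List (Finset (Fin 2)) => winSet h) := by
      funext h; rw [List.map_id]
    rw [← hfun]
    have := key id prof a b hab ({a} : Finset (Fin 2)) (by simp) (by simpa using hab.symm)
      ({b} : Finset (Fin 2)) (by simp) (by simpa using hab) n [] (by
        intro i h1 h2
        simp only [List.length_nil, Nat.zero_add] at h2
        exact hne i h2)
    rw [this]
    simp only [List.map_nil, List.length_nil, Nat.zero_add]
    have hv : votes ([] : List (Finset (Fin 2))) a = 0 := by simp [votes]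
    have hv' : votes ([] : List (Finset (Fin 2))) b = 0 := by simp [votes]
    rw [hv, hv']
    exact Wf_pos a b (by push_cast; omega)
end

section
/- There exists a sequential plurality voting profile with 3 alternatives and 4 voters plus a deterministic tie-breaking order in which one alternative is a Condorcet winner but a different alternative is elected in the unique subgame-perfect equilibrium outcome. Concretely: alternatives {A,B,C}; preferences Voter 1: C≻A≻B, Voter 2: A≻C≻B, Voter 3: A≻C≻B, Voter 4: B≻A≻C; tie-break order C≻B≻A. Then A is a Condorcet winner, yet C is elected. -/
open Classical

/-!
A is the Condorcet winner by direct count. In the sequential game every voter, and the tie-break,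
ranks alternatives strictly, so each `maxWrt` in the backward induction is the unique rank
minimiser; replacing it by a computable argmin turns the subgame-perfect outcome into a finite
computation over the 4^4 ballot sequences. On the equilibrium path voter 1 votes for B, his worst
alternative, after which voters 2 and 3 settle on C; every other first ballot, abstention
included, leads to A.
-/

section MaxWrt

variable {O : Type}

theorem maxWrt_eq_of_forall_worse [Nonempty O] {worse : O → O → Prop}
    (asymm : ∀ x y, worse x y → ¬ worse y x) {s : Finset O} {o : O} (ho : o ∈ s)
    (hbest : ∀ o' ∈ s, o' ≠ o → worse o' o) : maxWrt worse s = o := by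
  have hex : ∃ o ∈ s, ∀ o' ∈ s, o' ≠ o → worse o' o := ⟨o, ho, hbest⟩
  rw [maxWrt, dif_pos hex]
  obtain ⟨hmem, hchosen⟩ := hex.choose_spec
  by_contra hne
  exact asymm _ _ (hbest _ hmem hne) (hchosen o ho (Ne.symm hne))

def argminRank [LinearOrder O] [Inhabited O] (r : O → ℕ) (s : Finset O) : O :=
  if h : (s.filter fun o => ∀ o' ∈ s, r o ≤ r o').Nonempty then
    (s.filter fun o => ∀ o' ∈ s, r o ≤ r o').min' h
  else default

theorem maxWrt_rank_eq_argminRank [LinearOrder O] [Inhabited O] {r : O → ℕ}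
    (hr : Function.Injective r) {s : Finset O} (hs : s.Nonempty) :
    maxWrt (fun x y => r y < r x) s = argminRank r s := by
  obtain ⟨o, ho, hmin⟩ := s.exists_min_image r hs
  have hbest : ∀ o' ∈ s, o' ≠ o → r o < r o' := fun o' ho' hne =>
    (hmin o' ho').lt_of_ne fun h => hne (hr h).symm
  have hfilter : (s.filter fun o => ∀ o' ∈ s, r o ≤ r o') = {o} := by
    ext a
    simp only [Finset.mem_filter, Finset.mem_singleton]
    constructor
    · rintro ⟨ha, hamin⟩
      by_contra hne
      exact (hbest a ha hne).not_ge (hamin o ho)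
    · rintro rfl
      exact ⟨ho, hmin⟩
  rw [maxWrt_eq_of_forall_worse (fun x y h h' => h.not_gt h') ho hbest, argminRank,
    dif_pos (hfilter ▸ Finset.singleton_nonempty o)]
  simp only [hfilter, Finset.min'_singleton]

end MaxWrt

section BackwardInduction

variable {B O : Type} [Fintype B] [LinearOrder O] [Inhabited O]

def speOutRank (r : ℕ → O → ℕ) (outcome : List B → O) : ℕ → List B → O
  | 0, h => outcome h
  | n+1, h => argminRank (r h.length)
      (Finset.univ.image (fun b => speOutRank r outcome n (h ++ [b])))

theorem speOut_eq_speOutRank [Nonempty B] (r : ℕ → O → ℕ)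
    (hr : ∀ k, Function.Injective (r k))
    (outcome : List B → O) (n : ℕ) (h : List B) :
    speOut (fun k x y => r k y < r k x) outcome n h = speOutRank r outcome n h := by
  induction n generalizing h with
  | zero => rfl
  | succ n ih =>
    simp only [speOut, speOutRank, ih]
    -- `speOut` forms its image with the classical `DecidableEq O`
    convert maxWrt_rank_eq_argminRank (hr h.length) (Finset.univ_nonempty (α := B) |>.image _)

end BackwardInduction

theorem winSet_nonempty {m : ℕ} [NeZero m] (h : List (Finset (Fin m))) : (winSet h).Nonempty := by
  obtain ⟨x, -, hx⟩ := Finset.univ.exists_max_image (votes h) Finset.univ_nonempty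
  exact ⟨x, Finset.mem_filter.mpr ⟨Finset.mem_univ x, fun y => hx y (Finset.mem_univ y)⟩⟩

theorem detWinner_eq_argminRank {m : ℕ} [NeZero m] {tb : Fin m → ℕ}
    (htb : Function.Injective tb) (h : List (Finset (Fin m))) :
    detWinner tb h = argminRank tb (winSet h) :=
  maxWrt_rank_eq_argminRank htb (winSet_nonempty h)

/-- Condorcet winner paradox in sequential plurality voting with deterministic
tie-breaking: 3 alternatives A=0, B=1, C=2, 4 voters
(C≻A≻B, A≻C≻B, A≻C≻B, B≻A≻C), tie-break order C≻B≻A.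
A is a Condorcet winner but C is elected in the SPE. -/
theorem condorcet_winner_paradox_plurality_deterministic :
    let prof : Fin 4 → Fin 3 → ℕ := ![![1,2,0], ![0,2,1], ![0,2,1], ![1,0,2]]
    let tb : Fin 3 → ℕ := ![2,1,0]
    (∀ y : Fin 3, y ≠ 0 → beats prof 0 y) ∧
    speOut (fun i (x y : Fin 3) => prof (Fin.ofNat 4 i) y < prof (Fin.ofNat 4 i) x)
      (fun h : List (Option (Fin 3)) => detWinner tb (h.map Option.toFinset)) 4 [] = 2 := by
  intro prof tb
  refine ⟨by unfold beats; decide, ?_⟩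
  have hprof : ∀ k, Function.Injective (prof (Fin.ofNat 4 k)) := by
    intro k
    generalize Fin.ofNat 4 k = i
    revert i
    decide
  rw [speOut_eq_speOutRank (fun k => prof (Fin.ofNat 4 k)) hprof]
  simp only [detWinner_eq_argminRank (show Function.Injective tb by decide)]
  decide
end

section
/- There exists a sequential approval voting profile with 3 alternatives and 4 voters plus a deterministic tie-breaking order in which a Condorcet winner is not elected. Concretely: Voter 1: C≻A≻B, Voter 2: A≻C≻B, Voter 3: A≻C≻B, Voter 4: B≻A≻C; tie-break order B≻C≻A. Then A is a Condorcet winner, yet C is the SPE winner. -/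
open Classical

/-!
A is a Condorcet winner by direct count: voters 1–3 rank it above B and voters 2–4 above C.
For the equilibrium, every preference in play is induced by an injective rank, so each mover's
choice in `speOut` is the rank-minimal outcome among her options. That makes the backward
induction computable (`List.argmin` over an explicit list of all ballots) and the kernel
evaluates it over the `8 ^ 4` ballot histories.
-/

lemma maxWrt_eq_of_forall {O : Type} [Nonempty O] {worse : O → O → Prop} {s : Finset O} {o : O}
    (hasymm : ∀ a b, worse a b → ¬worse b a) (ho : o ∈ s)
    (hmax : ∀ o' ∈ s, o' ≠ o → worse o' o) : maxWrt worse s = o := by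
  have h : ∃ o ∈ s, ∀ o' ∈ s, o' ≠ o → worse o' o := ⟨o, ho, hmax⟩
  rw [maxWrt, dif_pos h]
  obtain ⟨hmem, hchosen⟩ := h.choose_spec
  by_contra hne
  exact hasymm _ _ (hmax _ hmem hne) (hchosen o ho (Ne.symm hne))

lemma maxWrt_eq_of_mem_argmin {O β : Type} [Nonempty O] [LinearOrder β] {rank : O → β}
    (hrank : Function.Injective rank) {s : Finset O} {l : List O} (hsl : ∀ x, x ∈ s ↔ x ∈ l)
    {o : O} (ho : o ∈ l.argmin rank) : maxWrt (fun x y => rank y < rank x) s = o :=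
  maxWrt_eq_of_forall (fun _ _ => lt_asymm) ((hsl o).2 (List.argmin_mem ho)) fun o' ho' hne =>
    (List.le_of_mem_argmin ((hsl o').1 ho') ho).lt_of_ne (hrank.ne hne.symm)

lemma getD_argmin_mem_argmin {α β : Type} [LinearOrder β] (f : α → β) {l : List α}
    (hl : l ≠ []) (d : α) : (l.argmin f).getD d ∈ l.argmin f := by
  obtain ⟨a, ha⟩ := Option.ne_none_iff_exists'.1 (mt (List.argmin_eq_none (f := f)).1 hl)
  simp [ha]

def allBallots (m : ℕ) : List (Finset (Fin m)) :=
  (List.finRange m).sublists.map List.toFinset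

lemma mem_allBallots {m : ℕ} (B : Finset (Fin m)) : B ∈ allBallots m := by
  refine List.mem_map.2 ⟨(List.finRange m).filter (· ∈ B), ?_, ?_⟩
  · exact List.mem_sublists.2 List.filter_sublist
  · ext x; simp

def tallyWinner {m : ℕ} [NeZero m] (tb : Fin m → ℕ) (v : Fin m → ℕ) : Fin m :=
  (((List.finRange m).filter fun x => decide (∀ y, v y ≤ v x)).argmin tb).getD 0

lemma detWinner_eq_tallyWinner {m : ℕ} [NeZero m] {tb : Fin m → ℕ}
    (htb : Function.Injective tb) (h : List (Finset (Fin m))) :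
    detWinner tb h = tallyWinner tb (votes h) := by
  obtain ⟨x, hx⟩ := Finite.exists_max (votes h)
  have hne : (List.finRange m).filter (fun x => decide (∀ y, votes h y ≤ votes h x)) ≠ [] :=
    List.ne_nil_of_mem (List.mem_filter.2 ⟨List.mem_finRange x, by simpa using hx⟩)
  exact maxWrt_eq_of_mem_argmin htb (fun y => by simp [winSet]) (getD_argmin_mem_argmin _ hne _)

def speArgmin {B O β : Type} [LinearOrder β] (rank : ℕ → O → β) (outcome : List B → O)
    (moves : List B) (d : O) : ℕ → List B → O
  | 0, h => outcome h
  | n+1, h => ((moves.map fun b => speArgmin rank outcome moves d n (h ++ [b])).argmin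
      (rank h.length)).getD d

theorem speOut_eq_speArgmin {B O β : Type} [Fintype B] [Nonempty B] [Nonempty O] [LinearOrder β]
    {rank : ℕ → O → β} (hrank : ∀ k, Function.Injective (rank k)) (outcome : List B → O)
    {moves : List B} (hmoves : ∀ b, b ∈ moves) (d : O) (n : ℕ) (h : List B) :
    speOut (fun k x y => rank k y < rank k x) outcome n h =
      speArgmin rank outcome moves d n h := by
  induction n generalizing h with
  | zero => rfl
  | succ n ih =>
    have hne : moves ≠ [] := List.ne_nil_of_mem (hmoves (Classical.arbitrary B))
    refine maxWrt_eq_of_mem_argmin (hrank _) (fun o => ?_)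
      (getD_argmin_mem_argmin _ (by simpa using hne) d)
    simp [ih, hmoves]

/-- Condorcet winner paradox in sequential approval voting with deterministic
tie-breaking: 3 alternatives A=0, B=1, C=2, 4 voters
(C≻A≻B, A≻C≻B, A≻C≻B, B≻A≻C), tie-break order B≻C≻A.
A is a Condorcet winner but C is elected in the SPE. -/
theorem condorcet_winner_paradox_approval_deterministic :
    let prof : Fin 4 → Fin 3 → ℕ := ![![1,2,0], ![0,2,1], ![0,2,1], ![1,0,2]]
    let tb : Fin 3 → ℕ := ![2,0,1]
    (∀ y : Fin 3, y ≠ 0 → beats prof 0 y) ∧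
    speOut (fun i (x y : Fin 3) => prof (Fin.ofNat 4 i) y < prof (Fin.ofNat 4 i) x)
      (fun h : List (Finset (Fin 3)) => detWinner tb h) 4 [] = 2 := by
  intro prof tb
  refine ⟨by unfold beats; decide, ?_⟩
  have htb : Function.Injective tb := by decide
  have hprof : ∀ k, Function.Injective (prof (Fin.ofNat 4 k)) := fun k => by
    generalize Fin.ofNat 4 k = i
    revert i
    decide
  simp only [detWinner_eq_tallyWinner htb, speOut_eq_speArgmin hprof _ mem_allBallots 0]
  decide +kernel
end

section
/- In sequential plurality voting with deterministic tie-breaking, there exists a profile with 3 alternatives and only 2 voters in which a Pareto-dominated alternative is elected. Concretely: Voter 1: A≻C≻B, Voter 2: B≻A≻C; tie-break order C≻B≻A. Then A Pareto dominates C (both voters prefer A to C), yet C is the SPE winner. -/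
open Classical

theorem maxWrt_eq {O : Type} [Nonempty O] {worse : O → O → Prop}
    (asymm : ∀ a b, worse a b → ¬ worse b a) {s : Finset O} {o : O} (ho : o ∈ s)
    (hdom : ∀ o' ∈ s, o' ≠ o → worse o' o) : maxWrt worse s = o := by
  have hex : ∃ o ∈ s, ∀ o' ∈ s, o' ≠ o → worse o' o := ⟨o, ho, hdom⟩
  rw [maxWrt, dif_pos hex]
  obtain ⟨hchosen, hchosen_dom⟩ := hex.choose_spec
  by_contra hne
  exact asymm _ _ (hdom _ hchosen hne) (hchosen_dom o ho (Ne.symm hne))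

theorem speOut_succ_eq {B O : Type} [Fintype B] [Nonempty O] {worse : ℕ → O → O → Prop}
    {outcome : List B → O} {n : ℕ} {h : List B} {o : O}
    (asymm : ∀ a b, worse h.length a b → ¬ worse h.length b a)
    (b : B) (hb : speOut worse outcome n (h ++ [b]) = o)
    (hdom : ∀ b', speOut worse outcome n (h ++ [b']) ≠ o →
      worse h.length (speOut worse outcome n (h ++ [b'])) o) :
    speOut worse outcome (n + 1) h = o := by
  refine maxWrt_eq asymm (Finset.mem_image.mpr ⟨b, Finset.mem_univ b, hb⟩) ?_
  rintro _ hmem hne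
  obtain ⟨b', -, rfl⟩ := Finset.mem_image.mp hmem
  exact hdom b' hne

theorem detWinner_eq {m : ℕ} [Nonempty (Fin m)] {tb : Fin m → ℕ} {h : List (Finset (Fin m))}
    {x : Fin m} (hx : x ∈ winSet h) (hmin : ∀ y ∈ winSet h, y ≠ x → tb x < tb y) :
    detWinner tb h = x :=
  maxWrt_eq (fun _ _ hab hba => hab.asymm hba) hx hmin

/-! Alternatives `A, B, C` are `0, 1, 2 : Fin 3`, a ballot is `none` (abstain) or `some x`, and
`voterRank i x` is the position of `x` in voter `i`'s ranking (`0` = best). -/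

abbrev voterRank : Fin 2 → Fin 3 → ℕ := ![![0, 2, 1], ![1, 0, 2]]

abbrev tieBreak : Fin 3 → ℕ := ![2, 1, 0]

open Fin.NatCast in
abbrev prefers (i : ℕ) (x y : Fin 3) : Prop := voterRank i y < voterRank i x

noncomputable abbrev pluralityWinner (h : List (Option (Fin 3))) : Fin 3 :=
  detWinner tieBreak (h.map Option.toFinset)

/-- Ties are broken towards the larger alternative, and with no votes cast all three tie. -/
theorem pluralityWinner_pair (b₁ b₂ : Option (Fin 3)) :
    pluralityWinner [b₁, b₂] = (b₁ ⊔ b₂).getD 2 := by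
  have hwin : ∀ b₁ b₂ : Option (Fin 3),
      (b₁ ⊔ b₂).getD 2 ∈ winSet ([b₁, b₂].map Option.toFinset) ∧
      ∀ y ∈ winSet ([b₁, b₂].map Option.toFinset), y ≠ (b₁ ⊔ b₂).getD 2 →
        tieBreak ((b₁ ⊔ b₂).getD 2) < tieBreak y := by decide
  exact detWinner_eq (hwin b₁ b₂).1 (hwin b₁ b₂).2

theorem prefers_asymm (i : ℕ) (x y : Fin 3) (hxy : prefers i x y) : ¬ prefers i y x :=
  hxy.asymm

/-- Voter 2's best reply is always to vote `B`. -/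
theorem speOut_second_voter (b₁ : Option (Fin 3)) :
    speOut prefers pluralityWinner 1 [b₁] = pluralityWinner [b₁, some 1] := by
  have hdom : ∀ b₁ b₂ : Option (Fin 3), (b₁ ⊔ b₂).getD 2 ≠ (b₁ ⊔ some 1).getD 2 →
      prefers 1 ((b₁ ⊔ b₂).getD 2) ((b₁ ⊔ some 1).getD 2) := by decide
  refine speOut_succ_eq (prefers_asymm _) (some 1) rfl fun b₂ hne => ?_
  simp only [speOut, List.singleton_append, pluralityWinner_pair] at hne ⊢
  exact hdom b₁ b₂ hne

/-- Voting `C` is voter 1's only way to avoid `B`, her worst alternative. -/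
theorem speOut_first_voter : speOut prefers pluralityWinner 2 [] = 2 := by
  have hdom : ∀ b₁ : Option (Fin 3), (b₁ ⊔ some 1).getD 2 ≠ 2 →
      prefers 0 ((b₁ ⊔ some 1).getD 2) 2 := by decide
  refine speOut_succ_eq (prefers_asymm _) (some 2) ?_ fun b₁ hne => ?_
  · rw [List.nil_append, speOut_second_voter, pluralityWinner_pair]
    rfl
  · rw [List.nil_append, speOut_second_voter, pluralityWinner_pair] at hne ⊢
    exact hdom b₁ hne

open Fin.NatCast in
/-- Pareto-dominated paradox in sequential plurality voting with deterministic
tie-breaking: 3 alternatives A=0, B=1, C=2, 2 voters (A≻C≻B, B≻A≻C),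
tie-break order C≻B≻A. A Pareto dominates C, yet C is elected in the SPE. -/
theorem pareto_paradox_plurality_deterministic :
    let prof : Fin 2 → Fin 3 → ℕ := ![![0,2,1], ![1,0,2]]
    let tb : Fin 3 → ℕ := ![2,1,0]
    (∀ i : Fin 2, prof i 0 < prof i 2) ∧
    speOut (fun i (x y : Fin 3) => prof i y < prof i x)
      (fun h : List (Option (Fin 3)) => detWinner tb (h.map Option.toFinset)) 2 [] = 2 :=
  ⟨by decide, speOut_first_voter⟩
end
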